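/- arXiv:1909.06578 — 2 statements merged into one kernel-verified Lean document; each statement's English description precedes it below -/
import Mathlib

section
/- Let G₁ and G₂ be broken sun graphs with no perfect matching whose cycle lengths satisfy g₁ ≡ 0 (mod 4) and g₂ ≡ 0 (mod 4), and such that in each graph, between any pair of consecutive vertices of degree 3 along the cycle there is an odd number of vertices of degree 2. Then for any one-edge connection G = G₁ ⊙ G₂, the Laplacian L(G) has 2 as an eigenvalue. -/
open scoped Classical

/-- The one-edge connection `G₁ ⊙ G₂`. -/
def oneEdgeConn {V₁ V₂ : Type*} (G₁ : SimpleGraph V₁) (G₂ : SimpleGraph V₂)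
    (u : V₁) (v : V₂) : SimpleGraph (V₁ ⊕ V₂) :=
  SimpleGraph.fromRel (fun x y =>
    match x, y with
    | Sum.inl a, Sum.inl b => G₁.Adj a b
    | Sum.inr a, Sum.inr b => G₂.Adj a b
    | Sum.inl a, Sum.inr b => a = u ∧ b = v
    | Sum.inr _, Sum.inl _ => False)

/-- `G` is a broken sun graph presented by the cycle `c : Fin g → V` (with pendants attached
to some cycle vertices, at most one per cycle vertex). -/
def IsBrokenSunOn {V : Type*} (G : SimpleGraph V) (g : ℕ) (hg : 3 ≤ g) (c : Fin g → V) : Prop :=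
  Function.Injective c ∧
    (∀ i j : Fin g, G.Adj (c i) (c j) ↔
      (j = i + (⟨1, by omega⟩ : Fin g) ∨ i = j + (⟨1, by omega⟩ : Fin g))) ∧
    (∀ v : V, v ∉ Set.range c → ∃! w : V, G.Adj v w) ∧
    (∀ v : V, v ∉ Set.range c → ∀ w : V, G.Adj v w → w ∈ Set.range c) ∧
    (∀ i : Fin g, ∀ v w : V, v ∉ Set.range c → w ∉ Set.range c →
      G.Adj v (c i) → G.Adj w (c i) → v = w)

/-- Along the cycle `c : Fin g → V` of a broken sun graph, between any two consecutive
vertices of degree `3` there is an odd number of vertices of degree `2`. -/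
def OddGapCondition {V : Type*} [Fintype V] (G : SimpleGraph V) [DecidableRel G.Adj]
    (g : ℕ) (hg : 3 ≤ g) (c : Fin g → V) : Prop :=
  ∀ (i : Fin g) (m : ℕ) (hm : m + 1 ≤ g),
    G.degree (c i) = 3 →
    G.degree (c ⟨((i : ℕ) + m + 1) % g, Nat.mod_lt _ (by omega)⟩) = 3 →
    (∀ k < m, G.degree (c ⟨((i : ℕ) + k + 1) % g, Nat.mod_lt _ (by omega)⟩) = 2) →
    Odd m

/-!
On a broken sun whose cycle length is divisible by `4`, put `cos ((i + t) π / 2)` (the pattern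
`1, 0, -1, 0, …`) on the cycle vertex `c i` and `0` on the pendant vertices. The two cycle
neighbours of `c i` then carry opposite values, so `L X = 2 X` holds at every cycle vertex of
degree `2`. The odd-gap condition puts all cycle vertices of degree `3` at positions of the same
parity, so a suitable shift `t` makes `X` vanish at them as well as at the pendants, and there
the equation reads `0 = 0`. Two such eigenvectors, scaled to agree at the ends of the bridge
`u v`, glue to an eigenvector of `G₁ ⊙ G₂`: the bridge contributes `Y u - Y v = 0`.
-/

open Finset Matrix SimpleGraph Real

noncomputable def quarterWave (n : ℕ) : ℝ := cos (n * π / 2)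

theorem quarterWave_add_four_mul (n k : ℕ) : quarterWave (n + 4 * k) = quarterWave n := by
  rw [quarterWave, quarterWave, ← cos_add_nat_mul_two_pi (n * π / 2) k]
  push_cast
  ring_nf

theorem quarterWave_add_two (n : ℕ) : quarterWave (n + 2) = -quarterWave n := by
  rw [quarterWave, quarterWave, ← cos_add_pi]
  push_cast
  ring_nf

theorem quarterWave_eq_zero_of_odd {n : ℕ} (hn : Odd n) : quarterWave n = 0 := by
  obtain ⟨k, rfl⟩ := hn
  exact cos_eq_zero_iff.2 ⟨k, by push_cast; ring⟩

theorem quarterWave_ne_zero_of_even {n : ℕ} (hn : Even n) : quarterWave n ≠ 0 := by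
  obtain ⟨k, rfl⟩ := hn
  rw [quarterWave, show ((k + k : ℕ) : ℝ) * π / 2 = k * π by push_cast; ring, cos_nat_mul_pi]
  exact pow_ne_zero _ (by norm_num)

theorem quarterWave_mod_add {g : ℕ} (hg : 4 ∣ g) (n t : ℕ) :
    quarterWave (n % g + t) = quarterWave (n + t) := by
  obtain ⟨q, rfl⟩ := hg
  conv_rhs => rw [← Nat.mod_add_div n (4 * q), add_right_comm, mul_assoc,
    quarterWave_add_four_mul]

theorem quarterWave_fin_val_add_one {g : ℕ} [NeZero g] (hg : 4 ∣ g) (i : Fin g) (t : ℕ) :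
    quarterWave ((i + 1 : Fin g) + t) = quarterWave (i + (t + 1)) := by
  have h1 : 1 < g := by obtain ⟨q, rfl⟩ := hg; have := NeZero.ne (4 * q); omega
  rw [Fin.val_add, quarterWave_mod_add hg, Fin.val_one', Nat.mod_eq_of_lt h1, add_right_comm,
    add_assoc]

theorem quarterWave_fin_add_one_add_sub_one {g : ℕ} [NeZero g] (hg : 4 ∣ g) (i : Fin g)
    (t : ℕ) : quarterWave ((i + 1 : Fin g) + t) + quarterWave ((i - 1 : Fin g) + t) = 0 := by
  obtain ⟨k, rfl⟩ : ∃ k, i = k + 1 := ⟨i - 1, (sub_add_cancel i 1).symm⟩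
  rw [add_sub_cancel_right, quarterWave_fin_val_add_one hg, quarterWave_fin_val_add_one hg,
    show (k : ℕ) + (t + 1 + 1) = k + t + 2 by ring,
    quarterWave_add_two, neg_add_cancel]

def HasOddGaps (P : ℕ → Prop) (N : ℕ) : Prop :=
  ∀ a m, m + 1 ≤ N → P a → P (a + m + 1) → (∀ k < m, ¬P (a + k + 1)) → Odd m

theorem even_of_hasOddGaps {P : ℕ → Prop} {N : ℕ} (hgap : HasOddGaps P N)
    {a n : ℕ} (hn : n ≤ N) (ha : P a) (han : P (a + n)) : Even n := by
  induction n using Nat.strong_induction_on generalizing a with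
  | _ n ih =>
  classical
  rcases Nat.eq_zero_or_pos n with rfl | hpos
  · exact Even.zero
  have hex : ∃ k, k < n ∧ P (a + k + 1) :=
    ⟨n - 1, by omega, by rwa [add_assoc, Nat.sub_add_cancel hpos]⟩
  obtain ⟨hk, hPk⟩ := Nat.find_spec hex
  set k := Nat.find hex
  have hfirst : ∀ k' < k, ¬P (a + k' + 1) := fun k' hk' hP => Nat.find_min hex hk' ⟨by omega, hP⟩
  have hodd : Odd k := hgap a k (by omega) ha hPk hfirst
  have heven : Even (n - (k + 1)) :=
    ih _ (by omega) (by omega) hPk (by rwa [show a + k + 1 + (n - (k + 1)) = a + n by omega])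
  rw [show n = (k + 1) + (n - (k + 1)) by omega]
  exact hodd.add_one.add heven

theorem mod_two_eq_of_hasOddGaps {P : ℕ → Prop} {g : ℕ} (hg : Even g)
    (hP : ∀ n, P (n + g) ↔ P n) (hgap : HasOddGaps P g)
    {a b : ℕ} (ha : a < g) (hb : b < g) (hPa : P a) (hPb : P b) : a % 2 = b % 2 := by
  rcases le_total a b with hab | hba
  · obtain ⟨r, hr⟩ := even_of_hasOddGaps hgap (n := b - a) (by omega) hPa
      (by rwa [Nat.add_sub_cancel' hab])
    omega
  · obtain ⟨r, hr⟩ := even_of_hasOddGaps hgap (n := b + g - a) (by omega) hPa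
      (by rwa [show a + (b + g - a) = b + g by omega, hP])
    obtain ⟨s, hs⟩ := hg
    omega

theorem Fin.add_one_ne_sub_one {g : ℕ} [NeZero g] (hg : 3 ≤ g) (i : Fin g) : i + 1 ≠ i - 1 := by
  intro h
  rw [sub_eq_add_neg] at h
  have h2 := congrArg Fin.val (eq_neg_iff_add_eq_zero.1 (add_left_cancel h))
  rw [Fin.val_add, Fin.val_one', Nat.mod_eq_of_lt (show 1 < g by omega),
    Nat.mod_eq_of_lt (show 1 + 1 < g by omega)] at h2
  simp at h2

namespace IsBrokenSunOn

variable {V : Type*} {G : SimpleGraph V} {g : ℕ} {hg : 3 ≤ g} {c : Fin g → V}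

theorem card_neighborFinset_filter_notMem_range_le_one [Fintype V] [DecidableRel G.Adj]
    (h : IsBrokenSunOn G g hg c) (i : Fin g) :
    #((G.neighborFinset (c i)).filter (· ∉ Set.range c)) ≤ 1 :=
  card_le_one.2 fun _ hv _ hw => by
    simp only [mem_filter, mem_neighborFinset] at hv hw
    -- at most one pendant per cycle vertex
    exact h.2.2.2.2 i _ _ hv.2 hw.2 hv.1.symm hw.1.symm

section

variable [NeZero g]

theorem adj_iff (h : IsBrokenSunOn G g hg c) (i j : Fin g) :
    G.Adj (c i) (c j) ↔ j = i + 1 ∨ j = i - 1 := by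
  have hone : (⟨1, by omega⟩ : Fin g) = 1 :=
    Fin.ext (by simp [Nat.mod_eq_of_lt (show 1 < g by omega)])
  rw [h.2.1, hone, @eq_comm _ i, ← eq_sub_iff_add_eq]

variable [Fintype V] [DecidableRel G.Adj]

theorem neighborFinset_filter_mem_range (h : IsBrokenSunOn G g hg c) (i : Fin g) :
    (G.neighborFinset (c i)).filter (· ∈ Set.range c) = {c (i + 1), c (i - 1)} := by
  ext y
  simp only [mem_filter, mem_neighborFinset, mem_insert, mem_singleton]
  constructor
  · rintro ⟨hy, j, rfl⟩
    rcases (h.adj_iff i j).1 hy with rfl | rfl <;> simp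
  · rintro (rfl | rfl) <;> simp [h.adj_iff]

theorem degree_eq (h : IsBrokenSunOn G g hg c) (i : Fin g) :
    G.degree (c i) = 2 + #((G.neighborFinset (c i)).filter (· ∉ Set.range c)) := by
  rw [← card_neighborFinset_eq_degree, ← card_filter_add_card_filter_not (· ∈ Set.range c),
    h.neighborFinset_filter_mem_range, card_pair (h.1.ne (Fin.add_one_ne_sub_one hg i))]

theorem degree_eq_two_or_three (h : IsBrokenSunOn G g hg c) (i : Fin g) :
    G.degree (c i) = 2 ∨ G.degree (c i) = 3 := by
  have := h.card_neighborFinset_filter_notMem_range_le_one i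
  rw [h.degree_eq]
  omega

theorem degree_eq_three_of_adj (h : IsBrokenSunOn G g hg c) {w : V} (hw : w ∉ Set.range c)
    {i : Fin g} (hwi : G.Adj w (c i)) : G.degree (c i) = 3 := by
  have : 0 < #((G.neighborFinset (c i)).filter (· ∉ Set.range c)) :=
    card_pos.2 ⟨w, mem_filter.2 ⟨(G.mem_neighborFinset _ _).2 hwi.symm, hw⟩⟩
  have := h.card_neighborFinset_filter_notMem_range_le_one i
  rw [h.degree_eq]
  omega

theorem val_mod_two_eq_of_degree_eq_three (h : IsBrokenSunOn G g hg c)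
    (hgap : OddGapCondition G g hg c) (hg2 : Even g) {i j : Fin g}
    (hi : G.degree (c i) = 3) (hj : G.degree (c j) = 3) : (i : ℕ) % 2 = j % 2 := by
  let P (n : ℕ) : Prop := G.degree (c (Fin.ofNat g n)) = 3
  have hP {n n' : ℕ} (hn : n % g = n' % g) : P n ↔ P n' := by
    dsimp only [P]
    rw [show Fin.ofNat g n = Fin.ofNat g n' from Fin.ext hn]
  have hPval (i : Fin g) : P i ↔ G.degree (c i) = 3 := by
    dsimp only [P]
    rw [Fin.ofNat_val_eq_self]
  have hshift (a k : ℕ) : (a + k + 1) % g = (a % g + k + 1) % g := by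
    rw [add_assoc, add_assoc, Nat.mod_add_mod]
  refine mod_two_eq_of_hasOddGaps (P := P) hg2 (fun n => hP (Nat.add_mod_right n g)) ?_
    i.isLt j.isLt ((hPval i).2 hi) ((hPval j).2 hj)
  intro a m hm ha ham hfirst
  refine hgap (Fin.ofNat g a) m hm ha ((hP (hshift a m)).1 ham)
    fun k hk => (h.degree_eq_two_or_three _).resolve_right ?_
  exact mt (hP (hshift a k)).2 (hfirst k hk)

theorem exists_shift_odd_of_degree_eq_three (h : IsBrokenSunOn G g hg c)
    (hgap : OddGapCondition G g hg c) (hg2 : Even g) :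
    ∃ t : ℕ, ∀ i : Fin g, G.degree (c i) = 3 → Odd (i + t) := by
  by_cases h3 : ∃ i₀, G.degree (c i₀) = 3
  · obtain ⟨i₀, hi₀⟩ := h3
    refine ⟨i₀ + 1, fun i hi => Nat.odd_iff.2 ?_⟩
    have := h.val_mod_two_eq_of_degree_eq_three hgap hg2 hi hi₀
    omega
  · exact ⟨0, fun i hi => (h3 ⟨i, hi⟩).elim⟩

end

theorem exists_lapMatrix_mulVec_eq_two_smul [Fintype V] [DecidableEq V] [DecidableRel G.Adj]
    (h : IsBrokenSunOn G g hg c) (hg4 : 4 ∣ g) (hgap : OddGapCondition G g hg c) :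
    ∃ X : V → ℝ, X ≠ 0 ∧ G.lapMatrix ℝ *ᵥ X = (2 : ℝ) • X := by
  have : NeZero g := ⟨by omega⟩
  obtain ⟨t, ht⟩ := h.exists_shift_odd_of_degree_eq_three hgap
    (even_iff_two_dvd.2 ((by norm_num : 2 ∣ 4).trans hg4))
  set f : Fin g → ℝ := fun i => quarterWave (i + t)
  have hf3 (i : Fin g) (hi : G.degree (c i) = 3) : f i = 0 := quarterWave_eq_zero_of_odd (ht i hi)
  have hsum (x : V) : ∑ y ∈ G.neighborFinset x, Function.extend c f 0 y =
      ∑ j ∈ (G.neighborFinset x).preimage c h.1.injOn, f j := by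
    rw [← sum_preimage c _ h.1.injOn _ fun y _ hy => Function.extend_apply' f (0 : V → ℝ) y hy]
    simp only [h.1.extend_apply]
  refine ⟨Function.extend c f 0, fun h0 => ?_, funext fun w => ?_⟩
  · have := congrFun h0 (c ⟨t % 2, by omega⟩)
    rw [h.1.extend_apply, Pi.zero_apply] at this
    exact quarterWave_ne_zero_of_even (Nat.even_iff.2 (by simp only; omega)) this
  rw [SimpleGraph.lapMatrix_mulVec_apply, hsum, Pi.smul_apply, smul_eq_mul]
  by_cases hw : ∃ i, c i = w
  · obtain ⟨i, rfl⟩ := hw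
    have hpre : (G.neighborFinset (c i)).preimage c h.1.injOn = {i + 1, i - 1} := by
      ext j
      simp [h.adj_iff]
    rw [hpre, sum_pair (Fin.add_one_ne_sub_one hg i), quarterWave_fin_add_one_add_sub_one hg4,
      sub_zero, h.1.extend_apply]
    rcases h.degree_eq_two_or_three i with h2 | h3
    · rw [h2, Nat.cast_ofNat]
    · rw [hf3 i h3, mul_zero, mul_zero]
  · rw [Function.extend_apply' _ _ _ hw, Pi.zero_apply, mul_zero, mul_zero, zero_sub, neg_eq_zero]
    refine Finset.sum_eq_zero fun j hj => hf3 j (h.degree_eq_three_of_adj hw ?_)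
    simpa using hj

end IsBrokenSunOn

theorem SimpleGraph.lapMatrix_mulVec_apply_eq_sum_ite {V : Type*} [Fintype V] [DecidableEq V]
    (G : SimpleGraph V) [DecidableRel G.Adj] (X : V → ℝ) (x : V) :
    (G.lapMatrix ℝ *ᵥ X) x = ∑ y, if G.Adj x y then X x - X y else 0 := by
  rw [← Finset.sum_filter, ← neighborFinset_eq_filter, Finset.sum_sub_distrib, Finset.sum_const,
    nsmul_eq_mul, card_neighborFinset_eq_degree, lapMatrix_mulVec_apply]

section oneEdgeConn

variable {V₁ V₂ : Type*} {G₁ : SimpleGraph V₁} {G₂ : SimpleGraph V₂} {u : V₁} {v : V₂}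

@[simp]
theorem oneEdgeConn_adj_inl_inl {a b : V₁} :
    (oneEdgeConn G₁ G₂ u v).Adj (.inl a) (.inl b) ↔ G₁.Adj a b := by
  simp only [oneEdgeConn, fromRel_adj, ne_eq, Sum.inl.injEq, G₁.adj_comm b a, or_self,
    and_iff_right_iff_imp]
  exact G₁.ne_of_adj

@[simp]
theorem oneEdgeConn_adj_inr_inr {a b : V₂} :
    (oneEdgeConn G₁ G₂ u v).Adj (.inr a) (.inr b) ↔ G₂.Adj a b := by
  simp only [oneEdgeConn, fromRel_adj, ne_eq, Sum.inr.injEq, G₂.adj_comm b a, or_self,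
    and_iff_right_iff_imp]
  exact G₂.ne_of_adj

@[simp]
theorem oneEdgeConn_adj_inl_inr {a : V₁} {b : V₂} :
    (oneEdgeConn G₁ G₂ u v).Adj (.inl a) (.inr b) ↔ a = u ∧ b = v := by
  simp [oneEdgeConn]

@[simp]
theorem oneEdgeConn_adj_inr_inl {a : V₂} {b : V₁} :
    (oneEdgeConn G₁ G₂ u v).Adj (.inr a) (.inl b) ↔ b = u ∧ a = v := by
  simp [oneEdgeConn]

variable [Fintype V₁] [Fintype V₂] [DecidableEq V₁] [DecidableEq V₂]
  [DecidableRel G₁.Adj] [DecidableRel G₂.Adj]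

theorem oneEdgeConn_lapMatrix_mulVec {Y : V₁ ⊕ V₂ → ℝ} (hY : Y (.inl u) = Y (.inr v)) :
    (oneEdgeConn G₁ G₂ u v).lapMatrix ℝ *ᵥ Y =
      Sum.elim (G₁.lapMatrix ℝ *ᵥ (Y ∘ .inl)) (G₂.lapMatrix ℝ *ᵥ (Y ∘ .inr)) := by
  ext (a | a) <;>
    simp only [lapMatrix_mulVec_apply_eq_sum_ite, Fintype.sum_sum_type, Sum.elim_inl,
      Sum.elim_inr, Function.comp_apply, oneEdgeConn_adj_inl_inl, oneEdgeConn_adj_inl_inr,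
      oneEdgeConn_adj_inr_inr, oneEdgeConn_adj_inr_inl]
  · refine add_eq_left.2 (Finset.sum_eq_zero fun b _ => ?_)
    split_ifs with h
    · rw [h.1, h.2, hY, sub_self]
    · rfl
  · refine add_eq_right.2 (Finset.sum_eq_zero fun b _ => ?_)
    split_ifs with h
    · rw [h.1, h.2, hY, sub_self]
    · rfl

theorem oneEdgeConn_exists_lapMatrix_mulVec_eq_smul {μ : ℝ} {X₁ : V₁ → ℝ} {X₂ : V₂ → ℝ}
    (hX₁ : X₁ ≠ 0) (hX₂ : X₂ ≠ 0) (h₁ : G₁.lapMatrix ℝ *ᵥ X₁ = μ • X₁)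
    (h₂ : G₂.lapMatrix ℝ *ᵥ X₂ = μ • X₂) (u : V₁) (v : V₂) :
    ∃ Y : V₁ ⊕ V₂ → ℝ, Y ≠ 0 ∧ (oneEdgeConn G₁ G₂ u v).lapMatrix ℝ *ᵥ Y = μ • Y := by
  have key : ∀ α β : ℝ, α * X₁ u = β * X₂ v →
      (oneEdgeConn G₁ G₂ u v).lapMatrix ℝ *ᵥ Sum.elim (α • X₁) (β • X₂) =
        μ • Sum.elim (α • X₁) (β • X₂) := by
    intro α β h
    rw [oneEdgeConn_lapMatrix_mulVec (by simpa using h), Sum.elim_comp_inl, Sum.elim_comp_inr,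
      mulVec_smul, mulVec_smul, h₁, h₂]
    ext (a | a) <;> simp only [Sum.elim_inl, Sum.elim_inr, Pi.smul_apply, smul_comm μ]
  by_cases hu : X₁ u = 0
  · refine ⟨Sum.elim ((1 : ℝ) • X₁) ((0 : ℝ) • X₂), ?_, key 1 0 (by simp [hu])⟩
    simpa [funext_iff] using hX₁
  · refine ⟨Sum.elim (X₂ v • X₁) (X₁ u • X₂), ?_, key _ _ (mul_comm _ _)⟩
    refine fun hY => hX₂ (funext fun b => ?_)
    simpa [hu] using congrFun hY (.inr b)

end oneEdgeConn

theorem brokenSun_oneEdgeConn_eigenvalue_two_general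
    {V₁ V₂ : Type*} [Fintype V₁] [Fintype V₂] [DecidableEq V₁] [DecidableEq V₂]
    (G₁ : SimpleGraph V₁) (G₂ : SimpleGraph V₂)
    [DecidableRel G₁.Adj] [DecidableRel G₂.Adj]
    (g₁ g₂ : ℕ) (hg₁ : 3 ≤ g₁) (hg₂ : 3 ≤ g₂)
    (c₁ : Fin g₁ → V₁) (c₂ : Fin g₂ → V₂)
    (hbs₁ : IsBrokenSunOn G₁ g₁ hg₁ c₁) (hbs₂ : IsBrokenSunOn G₂ g₂ hg₂ c₂)
    (hg₁4 : g₁ % 4 = 0) (hg₂4 : g₂ % 4 = 0)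
    (hgap₁ : OddGapCondition G₁ g₁ hg₁ c₁) (hgap₂ : OddGapCondition G₂ g₂ hg₂ c₂)
    (u : V₁) (v : V₂) :
    ∃ X : (V₁ ⊕ V₂) → ℝ, X ≠ 0 ∧
      ((oneEdgeConn G₁ G₂ u v).lapMatrix ℝ).mulVec X = (2 : ℝ) • X := by
  obtain ⟨X₁, hX₁, hLX₁⟩ :=
    hbs₁.exists_lapMatrix_mulVec_eq_two_smul (Nat.dvd_of_mod_eq_zero hg₁4) hgap₁
  obtain ⟨X₂, hX₂, hLX₂⟩ :=
    hbs₂.exists_lapMatrix_mulVec_eq_two_smul (Nat.dvd_of_mod_eq_zero hg₂4) hgap₂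
  exact oneEdgeConn_exists_lapMatrix_mulVec_eq_smul hX₁ hX₂ hLX₁ hLX₂ u v

/-- If `G₁, G₂` are broken sun graphs with no perfect matching, with cycle
lengths `g₁ ≡ g₂ ≡ 0 (mod 4)` and an odd number of degree-`2` vertices between any pair of
consecutive degree-`3` vertices along the cycle, then any one-edge connection `G₁ ⊙ G₂` has
`2` as a Laplacian eigenvalue. -/
theorem brokenSun_oneEdgeConn_eigenvalue_two
    {V₁ V₂ : Type*} [Fintype V₁] [Fintype V₂] [DecidableEq V₁] [DecidableEq V₂]
    (G₁ : SimpleGraph V₁) (G₂ : SimpleGraph V₂)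
    [DecidableRel G₁.Adj] [DecidableRel G₂.Adj]
    (g₁ g₂ : ℕ) (hg₁ : 3 ≤ g₁) (hg₂ : 3 ≤ g₂)
    (c₁ : Fin g₁ → V₁) (c₂ : Fin g₂ → V₂)
    (hbs₁ : IsBrokenSunOn G₁ g₁ hg₁ c₁) (hbs₂ : IsBrokenSunOn G₂ g₂ hg₂ c₂)
    (hnm₁ : ¬ ∃ M : G₁.Subgraph, M.IsPerfectMatching)
    (hnm₂ : ¬ ∃ M : G₂.Subgraph, M.IsPerfectMatching)
    (hg₁4 : g₁ % 4 = 0) (hg₂4 : g₂ % 4 = 0)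
    (hgap₁ : OddGapCondition G₁ g₁ hg₁ c₁) (hgap₂ : OddGapCondition G₂ g₂ hg₂ c₂)
    (u : V₁) (v : V₂) :
    ∃ X : (V₁ ⊕ V₂) → ℝ, X ≠ 0 ∧
      ((oneEdgeConn G₁ G₂ u v).lapMatrix ℝ).mulVec X = (2 : ℝ) • X :=
  brokenSun_oneEdgeConn_eigenvalue_two_general G₁ G₂ g₁ g₂ hg₁ hg₂ c₁ c₂ hbs₁ hbs₂ hg₁4 hg₂4 hgap₁
    hgap₂ u v
end

section
/- Let G be a unicyclic graph with a perfect matching M obtained as G = (G \ {u, v}) ⊙ S₂ where u is a pendant vertex at maximal distance from the cycle in its attached tree, v is its neighbor of degree 2, and S₂ is the edge uv. If X is an eigenvector of L(G \ {u,v}) for eigenvalue 2 and w is the neighbor of v in G \ {u,v}, then Z defined by Z = X on V(G) \ {u,v}, Z(v) = x(w), Z(u) = −x(w) is an eigenvector of L(G) for eigenvalue 2. -/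
open scoped Classical

/-!
The Laplacian acts locally, so `L(G) Z` can be compared with `L(G \ {u,v}) X` vertex by vertex.
At a vertex of `G \ {u,v}` only its neighbours among `u, v` add terms, and the only such neighbour
is `v`, adjacent to `w` alone, contributing `Z w - Z v = 0`. At `v` one gets
`2 x(w) - (-x(w)) - x(w) = 2 x(w)`, and at the pendant vertex `u` one gets
`-x(w) - x(w) = 2 (-x(w))`: this last vertex is the one that forces the eigenvalue `2`.
-/

namespace SimpleGraph

open Matrix

variable {V R : Type*} {G : SimpleGraph V}

theorem neighborFinset_eq_singleton_of_degree_eq_one {u v : V} [Fintype (G.neighborSet u)]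
    (hdu : G.degree u = 1) (huv : G.Adj u v) : G.neighborFinset u = {v} :=
  (Finset.eq_of_subset_of_card_le (by simpa using huv) (by simp [hdu])).symm

theorem neighborFinset_eq_pair_of_degree_eq_two [DecidableEq V] {v u w : V}
    [Fintype (G.neighborSet v)] (hdv : G.degree v = 2) (hvu : G.Adj v u) (hvw : G.Adj v w)
    (huw : u ≠ w) : G.neighborFinset v = {u, w} :=
  (Finset.eq_of_subset_of_card_le (by simp [Finset.insert_subset_iff, hvu, hvw])
    (by simp [hdv, huw])).symm

variable [Fintype V] [DecidableEq V] [DecidableRel G.Adj] [CommRing R]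

theorem lapMatrix_mulVec_apply_eq_sum_sub (Z : V → R) (p : V) :
    (G.lapMatrix R *ᵥ Z) p = ∑ y ∈ G.neighborFinset p, (Z p - Z y) := by
  rw [lapMatrix_mulVec_apply, Finset.sum_sub_distrib, Finset.sum_const,
    card_neighborFinset_eq_degree, nsmul_eq_mul]

theorem lapMatrix_mulVec_induce_apply {s : Set V} [DecidablePred (· ∈ s)] (Z : V → R) (p : s) :
    (G.lapMatrix R *ᵥ Z) p = ((G.induce s).lapMatrix R *ᵥ fun q : s ↦ Z q) p
      + ∑ y ∈ G.neighborFinset p with y ∉ s, (Z p - Z y) := by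
  rw [lapMatrix_mulVec_apply_eq_sum_sub, lapMatrix_mulVec_apply_eq_sum_sub,
    ← Finset.sum_filter_add_sum_filter_not _ (· ∈ s)]
  congr 1
  refine Eq.trans ?_ (Finset.sum_map _ (.subtype (· ∈ s)) fun y ↦ Z p - Z y)
  rw [map_neighborFinset_induce]
  congr 1
  ext
  simp

theorem lapMatrix_mulVec_eq_two_smul_of_pendant_path {u v w : V} (hdu : G.degree u = 1)
    (huv : G.Adj u v) (hdv : G.degree v = 2) (hvw : G.Adj v w) (hwu : w ≠ u) (Z : V → R)
    (hZ : (G.induce {x | x ≠ u ∧ x ≠ v}).lapMatrix R *ᵥ (fun q ↦ Z q) =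
      (2 : R) • fun q : ({x | x ≠ u ∧ x ≠ v} : Set V) ↦ Z q)
    (hZv : Z v = Z w) (hZu : Z u = -Z w) :
    G.lapMatrix R *ᵥ Z = (2 : R) • Z := by
  have hNu := neighborFinset_eq_singleton_of_degree_eq_one hdu huv
  have hNv := neighborFinset_eq_pair_of_degree_eq_two hdv huv.symm hvw hwu.symm
  ext p
  by_cases hp : p ≠ u ∧ p ≠ v
  · rw [lapMatrix_mulVec_induce_apply (s := {x | x ≠ u ∧ x ≠ v}) Z ⟨p, hp⟩, congrFun hZ ⟨p, hp⟩,
      Finset.sum_eq_zero, add_zero]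
    · rfl
    intro y hy
    obtain ⟨hpy, hys⟩ := Finset.mem_filter.1 hy
    have hyp : p ∈ G.neighborFinset y := by simpa [adj_comm] using hpy
    obtain rfl | rfl : y = u ∨ y = v := by simpa [or_iff_not_imp_left] using hys
    · simp [hNu, hp.2] at hyp
    · obtain rfl : p = w := by simpa [hNv, hp.1] using hyp
      simp [hZv]
  obtain rfl | rfl : p = u ∨ p = v := by simpa [or_iff_not_imp_left] using hp
  · rw [lapMatrix_mulVec_apply, hNu, Finset.sum_singleton, hdu, Pi.smul_apply, hZv, hZu]
    ring
  · rw [lapMatrix_mulVec_apply, hNv, Finset.sum_pair hwu.symm, hdv, Pi.smul_apply, hZv, hZu]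
    ring

end SimpleGraph

theorem unicyclic_extend_eigenvector_two_general
    {V : Type*} [Fintype V] [DecidableEq V]
    (G : SimpleGraph V)
    (u v w : V) [DecidableRel G.Adj]
    (hdu : G.degree u = 1) (huv : G.Adj u v) (hdv : G.degree v = 2) (hvw : G.Adj v w)
    (hwu : w ≠ u) (hwv : w ≠ v)
    (X : {x : V // x ≠ u ∧ x ≠ v} → ℝ) (hXne : X ≠ 0)
    (hX : ((G.induce {x : V | x ≠ u ∧ x ≠ v}).lapMatrix ℝ).mulVec X = (2 : ℝ) • X) :
    (fun x : V => if hx : x ≠ u ∧ x ≠ v then X ⟨x, hx⟩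
        else if x = v then X ⟨w, hwu, hwv⟩ else -X ⟨w, hwu, hwv⟩) ≠ 0 ∧
      (G.lapMatrix ℝ).mulVec
        (fun x : V => if hx : x ≠ u ∧ x ≠ v then X ⟨x, hx⟩
          else if x = v then X ⟨w, hwu, hwv⟩ else -X ⟨w, hwu, hwv⟩) =
      (2 : ℝ) • (fun x : V => if hx : x ≠ u ∧ x ≠ v then X ⟨x, hx⟩
          else if x = v then X ⟨w, hwu, hwv⟩ else -X ⟨w, hwu, hwv⟩) := by
  set Z : V → ℝ := fun x => if hx : x ≠ u ∧ x ≠ v then X ⟨x, hx⟩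
    else if x = v then X ⟨w, hwu, hwv⟩ else -X ⟨w, hwu, hwv⟩ with hZ
  have hZX : (fun q : {x : V // x ≠ u ∧ x ≠ v} ↦ Z q) = X := funext fun q ↦ by simp [hZ, q.2]
  have hZv : Z v = Z w := by simp [hZ, hwu, hwv]
  have hZu : Z u = -Z w := by simp [hZ, huv.ne, hwu, hwv]
  refine ⟨fun h0 ↦ hXne ?_, ?_⟩
  · rw [← hZX, h0]
    rfl
  · exact SimpleGraph.lapMatrix_mulVec_eq_two_smul_of_pendant_path hdu huv hdv hvw hwu Z
      (hZX ▸ hX) hZv hZu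

/-- Let `G` be a unicyclic graph with a perfect matching, `u` a pendant vertex
at maximal distance from the cycle within its attached tree, `v` its neighbor with
`d_G(v) = 2`, and `w` the other neighbor of `v`. If `X` is an eigenvector of
`L(G \ {u,v})` for the eigenvalue `2`, then `Z` with `Z = X` on `V \ {u,v}`,
`Z v = X w`, `Z u = -X w` is an eigenvector of `L(G)` for the eigenvalue `2`. -/
theorem unicyclic_extend_eigenvector_two
    {V : Type*} [Fintype V] [DecidableEq V]
    (G : SimpleGraph V) (hconn : G.Connected)
    (huni : G.edgeFinset.card = Fintype.card V)
    (M : G.Subgraph) (hM : M.IsPerfectMatching)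
    (u v w : V) [DecidableRel G.Adj]
    (hdu : G.degree u = 1) (huv : G.Adj u v) (hdv : G.degree v = 2) (hvw : G.Adj v w)
    (hwu : w ≠ u) (hwv : w ≠ v)
    -- the (unique) cycle of `G`:
    (a : V) (wc : G.Walk a a) (hwc : wc.IsCycle)
    -- `u` is at maximal distance from the cycle within its attached tree
    -- (the component of `u` after deleting the cycle edges):
    (hmax : ∀ x : V, (G.deleteEdges {e | e ∈ wc.edges}).Reachable x u →
      (wc.support.toFinset.image fun b => G.dist x b).min ≤
        (wc.support.toFinset.image fun b => G.dist u b).min)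
    (X : {x : V // x ≠ u ∧ x ≠ v} → ℝ) (hXne : X ≠ 0)
    (hX : ((G.induce {x : V | x ≠ u ∧ x ≠ v}).lapMatrix ℝ).mulVec X = (2 : ℝ) • X) :
    (fun x : V => if hx : x ≠ u ∧ x ≠ v then X ⟨x, hx⟩
        else if x = v then X ⟨w, hwu, hwv⟩ else -X ⟨w, hwu, hwv⟩) ≠ 0 ∧
      (G.lapMatrix ℝ).mulVec
        (fun x : V => if hx : x ≠ u ∧ x ≠ v then X ⟨x, hx⟩
          else if x = v then X ⟨w, hwu, hwv⟩ else -X ⟨w, hwu, hwv⟩) =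
      (2 : ℝ) • (fun x : V => if hx : x ≠ u ∧ x ≠ v then X ⟨x, hx⟩
          else if x = v then X ⟨w, hwu, hwv⟩ else -X ⟨w, hwu, hwv⟩) :=
  unicyclic_extend_eigenvector_two_general G u v w hdu huv hdv hvw hwu hwv X hXne hX
end
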